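/- arXiv:1401.1303 — 7 statements merged into one kernel-verified Lean document; each statement's English description precedes it below -/
import Mathlib

section
/- Let V be a finite-dimensional vector space over a field F, let g_1, ..., g_r be invertible linear maps of V with g_1 g_2 ... g_r = 1, and let G be the subgroup of GL(V) they generate. If [V,G] = V and C_V(G) = 0, then the sum over i of dim [V, g_i] is at least 2·dim V (here dim [V, g_i] = rank(g_i − id_V)). -/
open Module

/-- **Scott's theorem.** If `g 1, ..., g r` are invertible linear maps of a
finite-dimensional vector space `V` with product `1`, generating a group `G`
with `[V,G] = V` and `C_V(G) = 0`, then `∑ i, dim [V, g i] ≥ 2 ⬝ dim V`. -/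
theorem scott_theorem
    {F V : Type*} [Field F] [AddCommGroup V] [Module F V] [FiniteDimensional F V]
    {r : ℕ} (g : Fin r → (V ≃ₗ[F] V))
    (hprod : (List.ofFn g).prod = 1)
    (hcomm : Submodule.span F
      {v : V | ∃ h ∈ Subgroup.closure (Set.range g), ∃ w : V, h w - w = v} = ⊤)
    (hfix : ∀ v : V, (∀ h ∈ Subgroup.closure (Set.range g), h v = v) → v = 0) :
    2 * finrank F V ≤
      ∑ i, finrank F (LinearMap.range ((g i : V →ₗ[F] V) - LinearMap.id)) := by
  classical
  set K : Fin r → Submodule F V :=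
    fun i => LinearMap.range ((g i : V →ₗ[F] V) - LinearMap.id) with hKdef
  -- prefix products
  set P : ℕ → (V ≃ₗ[F] V) := fun n => ((List.ofFn g).take n).prod with hPdef
  have hP0 : P 0 = 1 := by simp [hPdef]
  have hPr : P r = 1 := by
    have : ((List.ofFn g).take r) = List.ofFn g :=
      List.take_of_length_le (by simp)
    simp [hPdef, this, hprod]
  have hPsucc : ∀ i : Fin r, P (i + 1) = P i * g i := by
    intro i
    have h1 : (List.ofFn g).take (i + 1) = (List.ofFn g).take i ++ [g i] := by
      rw [List.take_succ]
      congr 1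
      have : (List.ofFn g)[(i : ℕ)]? = some (g i) := by
        simp [List.getElem?_eq_getElem, i.isLt]
      simp [this]
    simp [hPdef, h1]
  have hmemK : ∀ (i : Fin r) (v : V), (g i) v - v ∈ K i := by
    intro i v
    exact ⟨v, by simp⟩
  -- the map σ
  let f : ∀ i : Fin r, K i →ₗ[F] V :=
    fun i => (P i).toLinearMap ∘ₗ (K i).subtype
  let σ : (∀ i, K i) →ₗ[F] V := LinearMap.lsum F (fun i => (K i : Submodule F V)) F f
  have hσ_apply : ∀ x : ∀ i, K i, σ x = ∑ i : Fin r, P (i : ℕ) ((x i : V)) := by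
    intro x
    simp [σ, LinearMap.lsum_apply, f]
  -- the map δ
  let δ : V →ₗ[F] (∀ i, K i) := LinearMap.pi fun i =>
    ((g i : V →ₗ[F] V) - LinearMap.id).codRestrict (K i)
      (fun v => LinearMap.mem_range_self _ v)
  have hδ_apply : ∀ (v : V) (i : Fin r), ((δ v) i : V) = (g i) v - v := by
    intro v i
    simp [δ, LinearMap.codRestrict]
  -- σ ∘ δ = 0
  have hcomp : ∀ v : V, σ (δ v) = 0 := by
    intro v
    rw [hσ_apply]
    have : ∀ i : Fin r, P i ((δ v) i : V) = P (i + 1) v - P i v := by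
      intro i
      rw [hδ_apply, map_sub, hPsucc i]
      rfl
    rw [Finset.sum_congr rfl fun i _ => this i]
    rw [Fin.sum_univ_eq_sum_range (fun n => P (n + 1) v - P n v)]
    rw [Finset.sum_range_sub (fun n => P n v)]
    rw [hPr, hP0]
    simp
  -- δ is injective
  have hδinj : Function.Injective δ := by
    rw [← LinearMap.ker_eq_bot]
    ext v
    simp only [LinearMap.mem_ker, Submodule.mem_bot]
    constructor
    · intro hv
      apply hfix
      intro h hh
      induction hh using Subgroup.closure_induction with
      | mem x hx =>
        obtain ⟨i, rfl⟩ := hx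
        have h0 : ((δ v i : V)) = (((0 : ∀ i, K i) i : V)) := by rw [hv]
        rw [hδ_apply] at h0
        simp only [Pi.zero_apply, ZeroMemClass.coe_zero] at h0
        exact sub_eq_zero.mp h0
      | one => simp
      | mul x y _ _ hx hy =>
        show (x * y) v = v
        calc (x * y) v = x (y v) := rfl
          _ = v := by rw [hy, hx]
      | inv x _ hx =>
        have : x.symm ((x : V ≃ₗ[F] V) v) = x.symm v := congrArg x.symm hx
        simpa using this.symm
    · intro hv; simp [hv]
  -- elementary elements of the range
  have helem : ∀ (i : Fin r) (v : V), P i ((g i) v - v) ∈ LinearMap.range σ := by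
    intro i v
    refine ⟨Pi.single i ⟨(g i) v - v, hmemK i v⟩, ?_⟩
    rw [hσ_apply]
    rw [Finset.sum_eq_single i]
    · simp
    · intro j _ hj; simp [Pi.single_eq_of_ne hj]
    · intro h; exact absurd (Finset.mem_univ i) h
  -- claim: P n v - v ∈ range σ
  have hclaim : ∀ (n : ℕ) (v : V), P n v - v ∈ LinearMap.range σ := by
    intro n
    induction n with
    | zero => intro v; rw [hP0]; simp
    | succ n ih =>
      intro v
      by_cases hn : n < r
      · have key : P (n + 1) v - P n v = P n ((g ⟨n, hn⟩) v - v) := by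
          rw [hPsucc ⟨n, hn⟩, map_sub]
          rfl
        rw [← sub_add_sub_cancel (P (n + 1) v) (P n v) v, key]
        exact Submodule.add_mem _ (helem ⟨n, hn⟩ v) (ih v)
      · have : (List.ofFn g).take (n + 1) = (List.ofFn g).take n := by
          rw [List.take_of_length_le (by simp; omega),
            List.take_of_length_le (by simp; omega)]
        have hPn : P (n + 1) = P n := by simp [hPdef, this]
        rw [hPn]; exact ih v
  -- each [V, g i] is in the range
  have hKle : ∀ i : Fin r, (K i : Submodule F V) ≤ LinearMap.range σ := by
    intro i w hw
    obtain ⟨v, rfl⟩ := hw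
    have h1 := helem i v
    have h2 := hclaim i ((g i) v - v)
    have h3 := Submodule.sub_mem _ h1 h2
    simp only [sub_sub_cancel] at h3
    simpa [LinearMap.sub_apply] using h3
  -- commutators of all group elements are in the range
  have hsub : ∀ h ∈ Subgroup.closure (Set.range g), ∀ v : V,
      h v - v ∈ LinearMap.range σ := by
    intro h hh
    induction hh using Subgroup.closure_induction with
    | mem x hx =>
      obtain ⟨i, rfl⟩ := hx
      intro v
      exact hKle i (hmemK i v)
    | one => intro v; simp
    | mul x y _ _ hx hy =>
      intro v
      have heq : (x * y) v - v = (x (y v) - y v) + (y v - v) := by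
        show x (y v) - v = _
        abel
      rw [heq]
      exact Submodule.add_mem _ (hx _) (hy _)
    | inv x _ hx =>
      intro v
      have hxx : x (x⁻¹ v) = v := x.apply_symm_apply v
      have h1 : x⁻¹ v - v = -(x (x⁻¹ v) - x⁻¹ v) := by
        rw [hxx, neg_sub]
      rw [h1]
      exact Submodule.neg_mem _ (hx _)
  -- range σ = ⊤
  have hrange : LinearMap.range σ = ⊤ := by
    rw [eq_top_iff, ← hcomm]
    rw [Submodule.span_le]
    rintro v ⟨h, hh, w, rfl⟩
    exact hsub h hh w
  -- range δ ≤ ker σ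
  have hrk : LinearMap.range δ ≤ LinearMap.ker σ := by
    rintro x ⟨v, rfl⟩
    exact hcomp v
  -- dimension count
  have h1 : finrank F (∀ i, K i) = ∑ i, finrank F (K i) :=
    Module.finrank_pi_fintype F
  have h2 : finrank F (LinearMap.range σ) + finrank F (LinearMap.ker σ)
      = finrank F (∀ i, K i) := LinearMap.finrank_range_add_finrank_ker σ
  have h3 : finrank F (LinearMap.range σ) = finrank F V := by
    rw [hrange]; exact finrank_top F V
  have h4 : finrank F V ≤ finrank F (LinearMap.ker σ) := by
    calc finrank F V = finrank F (LinearMap.range δ) :=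
          (LinearMap.finrank_range_of_inj hδinj).symm
      _ ≤ finrank F (LinearMap.ker σ) := Submodule.finrank_mono hrk
  have h5 : ∑ i, finrank F (K i) = finrank F V + finrank F (LinearMap.ker σ) := by
    rw [← h1, ← h2, h3]
  show 2 * finrank F V ≤ ∑ i, finrank F (K i)
  omega
end

section
/- For every prime p and every integer a ≥ 1, μ*(p^a, p) = p^(a−1); that is, every linear automorphism x of a finite-dimensional vector space over 𝔽_p having order exactly p^a satisfies rank(x − id) ≥ p^(a−1), and there exist such a vector space and automorphism with rank(x − id) = p^(a−1). -/
/-!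
For an automorphism `x` of order `p ^ (k + 1)` in characteristic `p`, Frobenius gives
`(x - 1) ^ p ^ j = x ^ p ^ j - 1`, so `N = x - 1` is nilpotent with `N ^ p ^ k ≠ 0`.
Restricted to its own range, `N` is nilpotent of index at most `rank N`, so
`N ^ (rank N + 1) = 0` and hence `rank N ≥ p ^ k`. Conversely, for the nilpotent shift `N`
on `K ^ (p ^ k + 1)`, `1 + N` has order `p ^ (k + 1)`, and `rank N = p ^ k` because the lower
bound is matched by `rank N < dim`, a nilpotent map not being invertible.
-/

open Module

section CharP

variable {R : Type*} [Ring R] (p : ℕ) [Fact p.Prime] [CharP R p]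

theorem pow_char_pow_eq_one_iff (u : R) (n : ℕ) : u ^ p ^ n = 1 ↔ (u - 1) ^ p ^ n = 0 := by
  rw [sub_pow_char_pow_of_commute p n (Commute.one_right u), one_pow, sub_eq_zero]

theorem orderOf_eq_char_pow_succ_iff (u : R) (k : ℕ) :
    orderOf u = p ^ (k + 1) ↔ (u - 1) ^ p ^ (k + 1) = 0 ∧ (u - 1) ^ p ^ k ≠ 0 := by
  have hp : p.Prime := Fact.out
  rw [ne_eq, ← pow_char_pow_eq_one_iff p u (k + 1), ← pow_char_pow_eq_one_iff p u k]
  constructor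
  · intro h
    exact ⟨h ▸ pow_orderOf_eq_one u, pow_ne_one_of_lt_orderOf (pow_ne_zero k hp.ne_zero)
      (h ▸ Nat.pow_lt_pow_succ hp.one_lt)⟩
  · rintro ⟨h₁, h₂⟩
    exact orderOf_eq_prime_pow h₂ h₁

end CharP

theorem LinearEquiv.orderOf_toLinearMap {R V : Type*} [Semiring R] [AddCommMonoid V] [Module R V]
    (x : V ≃ₗ[R] V) : orderOf (x : Module.End R V) = orderOf x :=
  orderOf_injective LinearEquiv.automorphismGroup.toLinearMapMonoidHom
    (fun _ _ h => LinearEquiv.toLinearMap_injective h) x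

namespace Module.End

variable {K V : Type*} [Field K] [AddCommGroup V] [Module K V] [FiniteDimensional K V]
  {f : Module.End K V}

theorem pow_finrank_eq_zero_of_isNilpotent (hf : IsNilpotent f) : f ^ finrank K V = 0 := by
  obtain ⟨m, hm⟩ := hf
  simpa [hm] using ker_pow_le_ker_pow_finrank f m

theorem pow_finrank_range_succ_eq_zero (hf : IsNilpotent f) :
    f ^ (finrank K (LinearMap.range f) + 1) = 0 := by
  have hmaps : ∀ v ∈ LinearMap.range f, f v ∈ LinearMap.range f :=
    fun v _ => LinearMap.mem_range_self f v
  have hres := pow_finrank_eq_zero_of_isNilpotent (isNilpotent.restrict hmaps hf)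
  ext v
  have := LinearMap.congr_fun hres ⟨f v, LinearMap.mem_range_self f v⟩
  rw [pow_restrict, LinearMap.restrict_apply, LinearMap.zero_apply, Subtype.ext_iff] at this
  simpa [pow_succ] using this

theorem le_finrank_range_of_pow_ne_zero (hf : IsNilpotent f) {k : ℕ} (hk : f ^ k ≠ 0) :
    k ≤ finrank K (LinearMap.range f) := by
  by_contra! h
  exact hk (pow_eq_zero_of_le h (pow_finrank_range_succ_eq_zero hf))

theorem finrank_range_lt_of_isNilpotent [Nontrivial V] (hf : IsNilpotent f) :
    finrank K (LinearMap.range f) < finrank K V := by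
  refine Submodule.finrank_lt fun h => hf.not_isUnit ((isUnit_iff f).mpr ?_)
  have hsurj := LinearMap.range_eq_top.mp h
  exact ⟨LinearMap.injective_iff_surjective.mpr hsurj, hsurj⟩

end Module.End

section FinShift

variable (K : Type*) [Field K]

def finShift (n : ℕ) : Module.End K (Fin n → K) :=
  LinearMap.pi fun i => if h : (i : ℕ) + 1 < n then LinearMap.proj ⟨i + 1, h⟩ else 0

variable {K}

theorem finShift_apply (n : ℕ) (v : Fin n → K) (i : Fin n) :
    finShift K n v i = if h : (i : ℕ) + 1 < n then v ⟨i + 1, h⟩ else 0 := by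
  by_cases h : (i : ℕ) + 1 < n <;> simp [finShift, h]

theorem finShift_pow_apply (n k : ℕ) (v : Fin n → K) (i : Fin n) :
    (finShift K n ^ k) v i = if h : (i : ℕ) + k < n then v ⟨i + k, h⟩ else 0 := by
  induction k generalizing v with
  | zero => simp
  | succ k ih =>
    simp only [pow_succ, Module.End.mul_apply, ih, finShift_apply]
    split_ifs <;> first | rfl | omega

theorem finShift_pow_self (n : ℕ) : finShift K n ^ n = 0 := by
  ext v i
  simp [finShift_pow_apply]

theorem finShift_pow_ne_zero {n k : ℕ} (hk : k < n) : finShift K n ^ k ≠ 0 := fun h => by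
  simpa [finShift_pow_apply, hk] using congrFun (LinearMap.congr_fun h fun _ => 1) ⟨0, by omega⟩

end FinShift

theorem le_finrank_range_sub_id {K V : Type*} [Field K] [AddCommGroup V] [Module K V]
    [FiniteDimensional K V] (p : ℕ) [Fact p.Prime] [CharP K p] {k : ℕ} (x : V ≃ₗ[K] V)
    (hx : orderOf x = p ^ (k + 1)) :
    p ^ k ≤ finrank K (LinearMap.range ((x : V →ₗ[K] V) - LinearMap.id)) := by
  have hp : p.Prime := Fact.out
  rw [← x.orderOf_toLinearMap] at hx
  have : Nontrivial V := by
    refine not_subsingleton_iff_nontrivial.mp fun _ => ?_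
    have h1 : orderOf (x : Module.End K V) = 1 := orderOf_eq_one_iff.mpr (Subsingleton.elim _ _)
    exact (Nat.one_lt_pow k.succ_ne_zero hp.one_lt).ne' (hx.symm.trans h1)
  have : CharP (Module.End K V) p := charP_of_injective_algebraMap' K p
  obtain ⟨hnil, hne⟩ := (orderOf_eq_char_pow_succ_iff p _ k).mp hx
  exact Module.End.le_finrank_range_of_pow_ne_zero ⟨_, hnil⟩ hne

theorem exists_orderOf_eq_finrank_range_sub_id (K : Type*) [Field K] (p : ℕ) [Fact p.Prime]
    [CharP K p] (k : ℕ) :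
    ∃ (n : ℕ) (x : (Fin n → K) ≃ₗ[K] (Fin n → K)), orderOf x = p ^ (k + 1) ∧
      finrank K (LinearMap.range ((x : (Fin n → K) →ₗ[K] (Fin n → K)) - LinearMap.id)) = p ^ k := by
  have hp : p.Prime := Fact.out
  set N := finShift K (p ^ k + 1)
  have hnil : IsNilpotent N := ⟨_, finShift_pow_self _⟩
  have hne : N ^ p ^ k ≠ 0 := finShift_pow_ne_zero (Nat.lt_succ_self _)
  have : CharP (Module.End K (Fin (p ^ k + 1) → K)) p := charP_of_injective_algebraMap' K p
  let x := LinearMap.GeneralLinearGroup.generalLinearEquiv K _ hnil.isUnit_one_add.unit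
  have hx : (x : Module.End K (Fin (p ^ k + 1) → K)) = 1 + N := by simp [x]
  refine ⟨p ^ k + 1, x, ?_, ?_⟩
  · rw [← x.orderOf_toLinearMap, hx, orderOf_eq_char_pow_succ_iff, add_sub_cancel_left]
    exact ⟨pow_eq_zero_of_le (Nat.pow_lt_pow_succ hp.one_lt) (finShift_pow_self _), hne⟩
  · rw [hx, ← Module.End.one_eq_id, add_sub_cancel_left]
    have hlt := Module.End.finrank_range_lt_of_isNilpotent hnil
    rw [finrank_fin_fun] at hlt
    exact le_antisymm (Nat.lt_succ_iff.mp hlt) (Module.End.le_finrank_range_of_pow_ne_zero hnil hne)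

/-- `μ*(p^a, p) = p^(a-1)`: every linear automorphism of a finite-dimensional
`𝔽_p`-vector space of order exactly `p^a` satisfies `rank (x - id) ≥ p^(a-1)`,
and this bound is attained. -/
theorem mustar_prime_power (p : ℕ) [Fact p.Prime] (a : ℕ) (ha : 1 ≤ a) :
    (∀ (V : Type) [AddCommGroup V] [Module (ZMod p) V] [FiniteDimensional (ZMod p) V]
      (x : V ≃ₗ[ZMod p] V), orderOf x = p ^ a →
        p ^ (a - 1) ≤ finrank (ZMod p) (LinearMap.range ((x : V →ₗ[ZMod p] V) - LinearMap.id))) ∧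
    (∃ (n : ℕ) (x : (Fin n → ZMod p) ≃ₗ[ZMod p] (Fin n → ZMod p)),
      orderOf x = p ^ a ∧
      finrank (ZMod p) (LinearMap.range
        ((x : (Fin n → ZMod p) →ₗ[ZMod p] (Fin n → ZMod p)) - LinearMap.id)) = p ^ (a - 1)) := by
  obtain ⟨k, rfl⟩ := Nat.exists_eq_add_of_le' ha
  exact ⟨fun V _ _ _ x hx => le_finrank_range_sub_id p x hx,
    exists_orderOf_eq_finrank_range_sub_id (ZMod p) p k⟩
end

section
/- Let p be a prime, d ≥ 2 an integer, and k a real number. If p > 2 and ζ*(d,p) ≥ k > 0.04, then d ≤ 3/(k − 0.04). If p = 2 and ζ*(d,2) ≥ k > 0.032, then d ≤ 4/(k − 0.032). -/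
open Module

/-- `μ*(d,p)`: the smallest dimension of `[V,x] = range (x - id)` over all linear
automorphisms `x` of order exactly `d` of finite-dimensional vector spaces over `𝔽_p`
(with the convention `μ*(1,p) = 0`). -/
noncomputable def mustar (p d : ℕ) : ℕ :=
  sInf {μ : ℕ | ∃ (n : ℕ) (x : (Fin n → ZMod p) ≃ₗ[ZMod p] (Fin n → ZMod p)),
    orderOf x = d ∧
    finrank (ZMod p) (LinearMap.range
      ((x : (Fin n → ZMod p) →ₗ[ZMod p] (Fin n → ZMod p)) - LinearMap.id)) = μ}

/-- `ζ*(d,p) = (1/d)·(1 + Σ_{m ∣ d, m > 1} φ(m)·p^(−μ*(m,p)))`. -/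
noncomputable def zetastar (p d : ℕ) : ℝ :=
  (1 / (d : ℝ)) * (1 + ∑ m ∈ d.divisors.filter (fun m => 1 < m),
    (Nat.totient m : ℝ) * (p : ℝ) ^ (-(mustar p m : ℤ)))

/-!
If `rank (x - 1) ≤ r`, Cayley–Hamilton on `[V, x]` shows that `x` is killed by `(X - 1) * Q` for
some monic `Q` of degree `r` with `Q 0 ≠ 0`, so the order of `x` divides every `N` with
`(X - 1) * Q ∣ X ^ N - 1`. For `r ≤ 1` this gives orders dividing `p - 1` or `p`; for `p = 3, r = 2`
and `p = 2, r ≤ 4` the finitely many `Q` are settled by explicit factorisations. Hence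
`μ*(m,p) ≤ r` only when `m` divides an element of a small set `S_r`. Summing the layer-cake bound
`p ^ -μ ≤ p ^ -(R+1) + ∑_{r ≤ R, μ ≤ r} (p ^ -r - p ^ -(r+1))` against `φ` over the divisors
`m > 1` of `d`, where `∑ φ(m) = d - 1`, gives `d ζ*(d,p) ≤ 1 + (d - 1) p ^ -(R+1) + C`; with
`R = 1, 2, 4` for `p ≥ 5, p = 3, p = 2` the slope is at most `0.04, 0.04, 0.032` and `C ≤ 2, 2, 3`.
-/

open Polynomial Finset

theorem Module.End.aeval_restrict_apply {R V : Type*} [CommRing R] [AddCommGroup V] [Module R V]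
    {u : Module.End R V} {W : Submodule R V} (hW : ∀ w ∈ W, u w ∈ W) (q : R[X]) (w : W) :
    (aeval (u.restrict hW) q w : V) = aeval u q w := by
  induction q using Polynomial.induction_on' with
  | add f g hf hg => simp [hf, hg]
  | monomial n a => simp [aeval_monomial, Module.End.pow_restrict n hW, LinearMap.restrict_apply]

/-- The orders of automorphisms `x` with `rank (x - 1) ≤ r` divide elements of `S`
(`OrderCover.exists_orderOf_dvd`). -/
def OrderCover (K : Type*) [Field K] (r : ℕ) (S : Finset ℕ) : Prop :=
  ∀ Q : K[X], Q.Monic → Q.natDegree = r → Q.coeff 0 ≠ 0 → ∃ N ∈ S, (X - 1) * Q ∣ X ^ N - 1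

section Cover

variable {K V : Type*} [Field K] [AddCommGroup V] [Module K V] [FiniteDimensional K V]

theorem Module.End.exists_monic_aeval_X_sub_one_mul_eq_zero {u : Module.End K V}
    (hu : Function.Injective u) {r : ℕ} (hr : finrank K (LinearMap.range (u - 1)) ≤ r) :
    ∃ Q : K[X], Q.Monic ∧ Q.natDegree = r ∧ Q.coeff 0 ≠ 0 ∧ aeval u ((X - 1) * Q) = 0 := by
  set W := LinearMap.range (u - 1)
  have hW : ∀ w ∈ W, u w ∈ W := by
    rintro _ ⟨v, rfl⟩
    exact ⟨u v, by simp⟩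
  set χ := (u.restrict hW).charpoly
  have hχ : constantCoeff χ ≠ 0 := ((LinearMap.not_hasEigenvalue_zero_tfae _).out 2 5).mpr
    fun w hw => Subtype.ext <| hu <| by simpa using congr(($hw : V))
  have hχu : aeval u (χ * (X - 1)) = 0 := LinearMap.ext fun v => by
    rw [map_mul, Module.End.mul_apply, ← Module.End.aeval_restrict_apply hW χ ⟨_, v, by simp⟩,
      LinearMap.aeval_self_charpoly]
    rfl
  have hX1 : (X - 1 : K[X]).Monic ∧ (X - 1 : K[X]).natDegree = 1 := by
    simpa using And.intro (monic_X_sub_C (1 : K)) (natDegree_X_sub_C (1 : K))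
  refine ⟨χ * (X - 1) ^ (r - finrank K W), (LinearMap.charpoly_monic _).mul (hX1.1.pow _),
    ?_, ?_, ?_⟩
  · rw [(LinearMap.charpoly_monic _).natDegree_mul (hX1.1.pow _), LinearMap.charpoly_natDegree,
      natDegree_pow, hX1.2]
    omega
  · simpa [coeff_zero_eq_eval_zero] using hχ
  · rw [show (X - 1) * (χ * (X - 1) ^ (r - finrank K W)) =
      (X - 1) ^ (r - finrank K W) * (χ * (X - 1)) by ring, map_mul, hχu, mul_zero]

theorem OrderCover.exists_orderOf_dvd {r : ℕ} {S : Finset ℕ} (hS : OrderCover K r S)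
    (x : V ≃ₗ[K] V) (hx : finrank K (LinearMap.range ((x : V →ₗ[K] V) - LinearMap.id)) ≤ r) :
    ∃ N ∈ S, orderOf x ∣ N := by
  obtain ⟨Q, hQ, hdeg, h0, hx0⟩ :=
    Module.End.exists_monic_aeval_X_sub_one_mul_eq_zero x.injective hx
  obtain ⟨N, hN, B, hB⟩ := hS Q hQ hdeg h0
  refine ⟨N, hN, orderOf_dvd_of_pow_eq_one <| LinearEquiv.toLinearMap_injective ?_⟩
  have := congr(aeval (x : V →ₗ[K] V) $hB)
  rw [map_mul, hx0, zero_mul, map_sub, map_pow, aeval_X, map_one, sub_eq_zero] at this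
  exact (map_pow LinearEquiv.automorphismGroup.toLinearMapMonoidHom x N).trans this

end Cover

theorem orderCover_zero (K : Type*) [Field K] : OrderCover K 0 {1} := fun Q hQ hdeg _ =>
  ⟨1, mem_singleton_self 1, by rw [eq_one_of_monic_natDegree_zero hQ hdeg]; simp⟩

theorem orderCover_one (K : Type*) [Field K] [Fintype K] (p : ℕ) [Fact p.Prime] [CharP K p] :
    OrderCover K 1 {Fintype.card K - 1, p} := by
  intro Q hQ hdeg h0
  rw [hQ.eq_X_add_C hdeg]
  by_cases ha : Q.coeff 0 = -1
  · refine ⟨p, mem_insert_of_mem (mem_singleton_self p), ?_⟩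
    have hfrob : (X - 1 : K[X]) ^ p = X ^ p - 1 := by rw [sub_pow_char, one_pow]
    rw [ha, map_neg, map_one, ← sub_eq_add_neg, ← pow_two, ← hfrob]
    exact pow_dvd_pow _ (Fact.out : p.Prime).two_le
  · refine ⟨Fintype.card K - 1, mem_insert_self _ _, ?_⟩
    have hunit : IsUnit (1 - -Q.coeff 0) := by
      rw [sub_neg_eq_add, isUnit_iff_ne_zero]
      exact fun h => ha (eq_neg_of_add_eq_zero_right h)
    have h1 : X - C 1 ∣ (X ^ (Fintype.card K - 1) - 1 : K[X]) := by
      rw [dvd_iff_isRoot]; simp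
    have h2 : X - C (-Q.coeff 0) ∣ (X ^ (Fintype.card K - 1) - 1 : K[X]) := by
      rw [dvd_iff_isRoot]; simp [FiniteField.pow_card_sub_one_eq_one _ (neg_ne_zero.mpr h0)]
    simpa using (isCoprime_X_sub_C_of_isUnit_sub hunit).mul_dvd h1 h2

theorem ZMod.two_eq_zero_or_one (a : ZMod 2) : a = 0 ∨ a = 1 := by decide +revert

theorem ZMod.three_eq_zero_or_one_or_two (a : ZMod 3) : a = 0 ∨ a = 1 ∨ a = 2 := by
  decide +revert

theorem orderCover_zmod_two_two : OrderCover (ZMod 2) 2 {4, 3} := by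
  intro Q hQ hdeg h0
  rw [hQ.as_sum, hdeg]
  simp only [sum_range_succ, sum_range_zero, pow_zero, pow_one, mul_one, zero_add]
  have h0 : Q.coeff 0 = 1 := (ZMod.two_eq_zero_or_one _).resolve_left h0
  -- here and below, the cases run through the coefficients of `Q` in lexicographic order
  rcases ZMod.two_eq_zero_or_one (Q.coeff 1) with h1 | h1 <;>
  simp only [h0, h1, map_zero, map_one, zero_mul, add_zero, one_mul]
  · exact ⟨4, by simp, X + 1, by ring⟩
  · exact ⟨3, by simp, 1, by ring⟩

theorem orderCover_zmod_two_three : OrderCover (ZMod 2) 3 {4, 6, 7} := by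
  intro Q hQ hdeg h0
  rw [hQ.as_sum, hdeg]
  simp only [sum_range_succ, sum_range_zero, pow_zero, pow_one, mul_one, zero_add]
  have h0 : Q.coeff 0 = 1 := (ZMod.two_eq_zero_or_one _).resolve_left h0
  rcases ZMod.two_eq_zero_or_one (Q.coeff 1) with h1 | h1 <;>
  rcases ZMod.two_eq_zero_or_one (Q.coeff 2) with h2 | h2 <;>
  simp only [h0, h1, h2, map_zero, map_one, zero_mul, add_zero, one_mul]
  · exact ⟨6, by simp, X ^ 2 + X + 1, by ring⟩
  · exact ⟨7, by simp, X ^ 3 + X + 1, by ring_nf; reduce_mod_char⟩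
  · exact ⟨7, by simp, X ^ 3 + X ^ 2 + 1, by ring_nf; reduce_mod_char⟩
  · exact ⟨4, by simp, 1, by ring⟩

theorem orderCover_zmod_two_four : OrderCover (ZMod 2) 4 {8, 12, 14, 15} := by
  intro Q hQ hdeg h0
  rw [hQ.as_sum, hdeg]
  simp only [sum_range_succ, sum_range_zero, pow_zero, pow_one, mul_one, zero_add]
  have h0 : Q.coeff 0 = 1 := (ZMod.two_eq_zero_or_one _).resolve_left h0
  rcases ZMod.two_eq_zero_or_one (Q.coeff 1) with h1 | h1 <;>
  rcases ZMod.two_eq_zero_or_one (Q.coeff 2) with h2 | h2 <;>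
  rcases ZMod.two_eq_zero_or_one (Q.coeff 3) with h3 | h3 <;>
  simp only [h0, h1, h2, h3, map_zero, map_one, zero_mul, add_zero, one_mul]
  · exact ⟨8, by simp, X ^ 3 + X ^ 2 + X + 1, by ring⟩
  · exact ⟨15, by simp, X ^ 10 + X ^ 8 + X ^ 5 + X ^ 4 + X ^ 2 + X + 1, by ring_nf; reduce_mod_char⟩
  · exact ⟨12, by simp, X ^ 7 + X ^ 6 + X + 1, by ring⟩
  · exact ⟨14, by simp, X ^ 9 + X ^ 6 + X ^ 5 + X ^ 4 + X ^ 3 + X + 1, by ring_nf; reduce_mod_char⟩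
  · exact ⟨15, by simp, X ^ 10 + X ^ 9 + X ^ 8 + X ^ 6 + X ^ 5 + X ^ 2 + 1,
      by ring_nf; reduce_mod_char⟩
  · exact ⟨12, by simp, X ^ 7 + X ^ 5 + X ^ 4 + X ^ 3 + X ^ 2 + 1, by ring_nf; reduce_mod_char⟩
  · exact ⟨14, by simp, X ^ 9 + X ^ 8 + X ^ 6 + X ^ 5 + X ^ 4 + X ^ 3 + 1,
      by ring_nf; reduce_mod_char⟩
  · exact ⟨15, by simp, X ^ 10 + X ^ 5 + 1, by ring⟩

theorem orderCover_zmod_three_two : OrderCover (ZMod 3) 2 {8, 6} := by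
  intro Q hQ hdeg h0
  rw [hQ.as_sum, hdeg]
  simp only [sum_range_succ, sum_range_zero, pow_zero, pow_one, mul_one, zero_add]
  rcases (ZMod.three_eq_zero_or_one_or_two (Q.coeff 0)).resolve_left h0 with h0 | h0 <;>
  rcases ZMod.three_eq_zero_or_one_or_two (Q.coeff 1) with h1 | h1 | h1 <;>
  simp only [h0, h1, map_zero, map_one, map_ofNat, zero_mul, add_zero, one_mul]
  · exact ⟨8, by simp, X ^ 5 + X ^ 4 + X + 1, by ring⟩
  · exact ⟨6, by simp, X ^ 3 + 1, by ring⟩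
  · exact ⟨6, by simp, X ^ 3 + 2 * X ^ 2 + 2 * X + 1, by ring_nf; reduce_mod_char⟩
  · exact ⟨6, by simp, X ^ 3 + X ^ 2 + 2 * X + 2, by ring_nf; reduce_mod_char⟩
  · exact ⟨8, by simp, X ^ 5 + 2 * X ^ 3 + 2 * X ^ 2 + X + 2, by ring_nf; reduce_mod_char⟩
  · exact ⟨8, by simp, X ^ 5 + 2 * X ^ 4 + X ^ 3 + X ^ 2 + 2, by ring_nf; reduce_mod_char⟩

theorem exists_linearEquiv_orderOf_eq (R : Type*) [CommRing R] [Nontrivial R] {m : ℕ}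
    (hm : 2 ≤ m) : ∃ x : (Fin m → R) ≃ₗ[R] (Fin m → R), orderOf x = m := by
  have hinj : Function.Injective
      (DistribMulAction.toModuleAut R (Fin m → R) (S := (Equiv.Perm (Fin m))ᵈᵐᵃ)) :=
    fun s t h => FaithfulSMul.eq_of_smul_eq_smul fun f => LinearEquiv.congr_fun h f
  refine ⟨_, (orderOf_injective _ hinj (DomMulAct.mk (finRotate m))).trans ?_⟩
  have : orderOf (DomMulAct.mk (finRotate m)) = orderOf (finRotate m) :=
    orderOf_eq_orderOf_iff.mpr fun n => by
      rw [← DomMulAct.mk_pow, ← DomMulAct.mk_one, DomMulAct.mk.injective.eq_iff]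
  rw [this, (isCycle_finRotate_of_le hm).orderOf, support_finRotate_of_le hm, card_univ,
    Fintype.card_fin]

theorem pow_min_succ_eq_add_sum {α : Type*} [CommRing α] (q : α) (μ R : ℕ) :
    q ^ min μ (R + 1) =
      q ^ (R + 1) + ∑ r ∈ range (R + 1), if μ ≤ r then q ^ r - q ^ (r + 1) else 0 := by
  induction R with
  | zero => rcases μ with _ | μ <;> simp
  | succ R ih =>
    rw [sum_range_succ, ← add_assoc]
    split_ifs with h
    · rw [min_eq_left h] at ih
      rw [min_eq_left (by omega)]
      linear_combination ih
    · rw [min_eq_right (by omega : R + 1 ≤ μ)] at ih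
      rw [min_eq_right (by omega : R + 1 + 1 ≤ μ)]
      linear_combination ih

theorem Nat.sum_totient_filter_one_lt {n : ℕ} (hn : n ≠ 0) :
    ∑ m ∈ n.divisors.filter (1 < ·), Nat.totient m = n - 1 := by
  have h := Nat.sum_totient n
  rw [← sum_filter_add_sum_filter_not _ (1 < ·)] at h
  have : n.divisors.filter (¬ 1 < ·) = {1} := by
    ext m; simp only [mem_filter, Nat.mem_divisors, mem_singleton]
    constructor
    · rintro ⟨⟨hm, -⟩, h1⟩
      have := Nat.pos_of_dvd_of_pos hm (Nat.pos_of_ne_zero hn); omega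
    · rintro rfl; exact ⟨⟨one_dvd n, hn⟩, by omega⟩
  rw [this, sum_singleton, Nat.totient_one] at h
  omega

theorem Nat.sum_totient_filter_divisors_union_le {a b : ℕ} (ha : a ≠ 0) (hb : b ≠ 0) :
    ∑ m ∈ (a.divisors ∪ b.divisors).filter (1 < ·), Nat.totient m + 2 ≤ a + b := by
  have := sum_union_inter (s₁ := a.divisors.filter (1 < ·)) (s₂ := b.divisors.filter (1 < ·))
    (f := Nat.totient)
  rw [Nat.sum_totient_filter_one_lt ha, Nat.sum_totient_filter_one_lt hb, ← filter_union] at this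
  omega

theorem mul_zetastar_eq {p d : ℕ} (hd : d ≠ 0) :
    (d : ℝ) * zetastar p d =
      1 + ∑ m ∈ d.divisors.filter (1 < ·), (Nat.totient m : ℝ) * (p : ℝ)⁻¹ ^ mustar p m := by
  simp [zetastar, zpow_neg, inv_pow, hd]

section Zetastar

variable {p : ℕ} [Fact p.Prime]

theorem inv_natCast_pow_le_pow {m n : ℕ} (h : m ≤ n) : (p : ℝ)⁻¹ ^ n ≤ (p : ℝ)⁻¹ ^ m :=
  pow_le_pow_of_le_one (by positivity)
    (inv_le_one_of_one_le₀ (by exact_mod_cast (Fact.out : p.Prime).one_lt.le)) h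

theorem OrderCover.exists_dvd_of_mustar_le {r : ℕ} {S : Finset ℕ} (hS : OrderCover (ZMod p) r S)
    {m : ℕ} (hm : 2 ≤ m) (hr : mustar p m ≤ r) : ∃ N ∈ S, m ∣ N := by
  obtain ⟨x, hx⟩ := exists_linearEquiv_orderOf_eq (ZMod p) hm
  obtain ⟨n, y, hy, hrank⟩ : mustar p m ∈ _ := Nat.sInf_mem ⟨_, m, x, hx, rfl⟩
  obtain ⟨N, hN, hdvd⟩ := hS.exists_orderOf_dvd y (hrank.trans_le hr)
  exact ⟨N, hN, hy ▸ hdvd⟩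

theorem inv_pow_mustar_le {R : ℕ} {S : Fin (R + 1) → Finset ℕ}
    (hS : ∀ r : Fin (R + 1), OrderCover (ZMod p) r (S r)) (hS0 : ∀ r, 0 ∉ S r) {m : ℕ}
    (hm : 2 ≤ m) :
    (p : ℝ)⁻¹ ^ mustar p m ≤ (p : ℝ)⁻¹ ^ (R + 1) + ∑ r : Fin (R + 1),
      if m ∈ (S r).biUnion Nat.divisors then (p : ℝ)⁻¹ ^ (r : ℕ) - (p : ℝ)⁻¹ ^ (r + 1 : ℕ)
      else 0 := by
  calc (p : ℝ)⁻¹ ^ mustar p m ≤ (p : ℝ)⁻¹ ^ min (mustar p m) (R + 1) :=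
        inv_natCast_pow_le_pow (min_le_left _ _)
    _ = _ := by rw [pow_min_succ_eq_add_sum, sum_range]
    _ ≤ _ := by
      gcongr with r
      split_ifs with hμ hmS hmS
      · rfl
      · obtain ⟨N, hN, hmN⟩ := (hS r).exists_dvd_of_mustar_le hm hμ
        refine absurd (mem_biUnion.mpr ⟨N, hN, Nat.mem_divisors.mpr ⟨hmN, ?_⟩⟩) hmS
        exact ne_of_mem_of_not_mem hN (hS0 r)
      · exact sub_nonneg.mpr (inv_natCast_pow_le_pow (Nat.le_succ _))
      · rfl

theorem mul_zetastar_le {R : ℕ} {S : Fin (R + 1) → Finset ℕ}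
    (hS : ∀ r : Fin (R + 1), OrderCover (ZMod p) r (S r)) (hS0 : ∀ r, 0 ∉ S r) {d : ℕ}
    (hd : d ≠ 0) :
    (d : ℝ) * zetastar p d ≤ 1 + (d - 1) * (p : ℝ)⁻¹ ^ (R + 1) + ∑ r : Fin (R + 1),
      ((p : ℝ)⁻¹ ^ (r : ℕ) - (p : ℝ)⁻¹ ^ (r + 1 : ℕ)) *
        (∑ m ∈ ((S r).biUnion Nat.divisors).filter (1 < ·), Nat.totient m : ℕ) := by
  set D := d.divisors.filter (1 < ·)
  set w : Fin (R + 1) → ℝ := fun r => (p : ℝ)⁻¹ ^ (r : ℕ) - (p : ℝ)⁻¹ ^ (r + 1 : ℕ)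
  have hw : ∀ r, 0 ≤ w r := fun r => sub_nonneg.mpr (inv_natCast_pow_le_pow (Nat.le_succ _))
  have hD : ∑ m ∈ D, (Nat.totient m : ℝ) = d - 1 := by
    rw [← Nat.cast_sum, Nat.sum_totient_filter_one_lt hd, Nat.cast_sub (by omega), Nat.cast_one]
  rw [mul_zetastar_eq hd, add_assoc, ← hD]
  gcongr 1 + ?_
  calc ∑ m ∈ D, (Nat.totient m : ℝ) * (p : ℝ)⁻¹ ^ mustar p m
      ≤ ∑ m ∈ D, (Nat.totient m : ℝ) *
          ((p : ℝ)⁻¹ ^ (R + 1) + ∑ r, if m ∈ (S r).biUnion Nat.divisors then w r else 0) := by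
        gcongr with m hm
        exact inv_pow_mustar_le hS hS0 (by simp [D] at hm; omega)
    _ = (∑ m ∈ D, (Nat.totient m : ℝ)) * (p : ℝ)⁻¹ ^ (R + 1) +
          ∑ r, w r * ∑ m ∈ D with m ∈ (S r).biUnion Nat.divisors, (Nat.totient m : ℝ) := by
        simp only [mul_add, sum_add_distrib, sum_mul, mul_sum, mul_ite, mul_zero, sum_filter]
        rw [sum_comm]
        simp only [mul_comm]
    _ ≤ _ := by
        push_cast
        gcongr with r
        · exact hw r
        · intro m hm
          simp only [D, mem_filter] at hm ⊢
          exact ⟨hm.2, hm.1.2⟩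

end Zetastar

theorem mul_zetastar_two_le (d : ℕ) : (d : ℝ) * zetastar 2 d ≤ 4 + d * 0.032 := by
  rcases eq_or_ne d 0 with rfl | hd
  · norm_num
  set S : Fin 5 → Finset ℕ := ![{1}, {1, 2}, {4, 3}, {4, 6, 7}, {8, 12, 14, 15}]
  have hS : ∀ r : Fin 5, OrderCover (ZMod 2) r (S r) := by
    intro r; fin_cases r
    exacts [orderCover_zero _, by simpa [S] using orderCover_one (ZMod 2) 2,
      orderCover_zmod_two_two, orderCover_zmod_two_three, orderCover_zmod_two_four]
  have hE : ∀ r, ∑ m ∈ ((S r).biUnion Nat.divisors).filter (1 < ·), Nat.totient m =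
      ![0, 1, 5, 13, 39] r := by decide
  have h := mul_zetastar_le hS (by decide) hd
  norm_num [hE, Fin.sum_univ_succ, Matrix.cons_val] at h
  linarith

theorem mul_zetastar_three_le (d : ℕ) : (d : ℝ) * zetastar 3 d ≤ 3 + d * 0.04 := by
  rcases eq_or_ne d 0 with rfl | hd
  · norm_num
  set S : Fin 3 → Finset ℕ := ![{1}, {2, 3}, {8, 6}]
  have hS : ∀ r : Fin 3, OrderCover (ZMod 3) r (S r) := by
    intro r; fin_cases r
    exacts [orderCover_zero _, by simpa [S] using orderCover_one (ZMod 3) 3,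
      orderCover_zmod_three_two]
  have hE : ∀ r, ∑ m ∈ ((S r).biUnion Nat.divisors).filter (1 < ·), Nat.totient m =
      ![0, 3, 11] r := by decide
  have h := mul_zetastar_le hS (by decide) hd
  norm_num [hE, Fin.sum_univ_succ, Matrix.cons_val] at h
  linarith

theorem one_add_sub_one_mul_inv_sq_add_le {x d T : ℝ} (hx : 5 ≤ x) (hd : 0 ≤ d)
    (hT : T + 3 ≤ 2 * x) : 1 + (d - 1) * x⁻¹ ^ 2 + (x⁻¹ - x⁻¹ ^ 2) * T ≤ 3 + d * 0.04 := by
  set q := x⁻¹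
  have hq0 : 0 < q := inv_pos.mpr (by linarith)
  have hqx : q * x = 1 := inv_mul_cancel₀ (by linarith)
  have hq : q ≤ 1 / 5 := by rw [inv_le_comm₀ (by linarith) (by norm_num)]; norm_num; exact hx
  have hsmall : (d - 1) * q ^ 2 ≤ d * 0.04 := by
    have hq2 : q ^ 2 ≤ 0.04 := by nlinarith
    nlinarith [mul_le_mul_of_nonneg_left hq2 hd]
  have hlarge : (q - q ^ 2) * T ≤ 2 := calc
    (q - q ^ 2) * T ≤ (q - q ^ 2) * (2 * x - 3) := by
      gcongr
      · nlinarith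
      · linarith
    _ = 2 - 5 * q + 3 * q ^ 2 := by linear_combination (2 - 2 * q) * hqx
    _ ≤ 2 := by nlinarith
  linarith

theorem mul_zetastar_le_of_five_le {p : ℕ} [Fact p.Prime] (hp : 5 ≤ p) (d : ℕ) :
    (d : ℝ) * zetastar p d ≤ 3 + d * 0.04 := by
  rcases eq_or_ne d 0 with rfl | hd
  · norm_num
  set S : Fin 2 → Finset ℕ := ![{1}, {p - 1, p}]
  have hS : ∀ r : Fin 2, OrderCover (ZMod p) r (S r) := by
    intro r; fin_cases r
    exacts [orderCover_zero _, by simpa [S] using orderCover_one (ZMod p) p]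
  have hS0 : ∀ r, 0 ∉ S r := by
    intro r; fin_cases r <;> simp [S]; omega
  have hE0 : ∑ m ∈ ((S 0).biUnion Nat.divisors).filter (1 < ·), Nat.totient m = 0 := by
    simp [S]
  set T := ∑ m ∈ ((S 1).biUnion Nat.divisors).filter (1 < ·), Nat.totient m
  have hT : (T : ℝ) + 3 ≤ 2 * p := by
    have := Nat.sum_totient_filter_divisors_union_le (a := p - 1) (b := p) (by omega) (by omega)
    simp only [T, S, Matrix.cons_val_one, Matrix.cons_val_zero, biUnion_insert, singleton_biUnion]
    exact_mod_cast (by omega : _ + 3 ≤ 2 * p)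
  have h := mul_zetastar_le hS hS0 hd
  rw [Fin.sum_univ_two, hE0] at h
  simp only [Fin.val_zero, Fin.val_one, Nat.cast_zero, mul_zero, zero_add, pow_one,
    one_add_one_eq_two] at h
  exact h.trans (one_add_sub_one_mul_inv_sq_add_le (by exact_mod_cast hp) d.cast_nonneg hT)

theorem le_div_sub_of_mul_le_add_mul {d z k c s : ℝ} (hd : 0 ≤ d) (h : d * z ≤ c + d * s)
    (hk : k ≤ z) (hs : s < k) : d ≤ c / (k - s) := by
  rw [le_div_iff₀ (sub_pos.mpr hs)]
  nlinarith [mul_le_mul_of_nonneg_left hk hd]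

theorem zetastar_degree_bound_general (p d : ℕ) (hp : p.Prime) (k : ℝ) :
    (2 < p → k ≤ zetastar p d → 0.04 < k → (d : ℝ) ≤ 3 / (k - 0.04)) ∧
    (p = 2 → k ≤ zetastar p d → 0.032 < k → (d : ℝ) ≤ 4 / (k - 0.032)) := by
  have := Fact.mk hp
  refine ⟨fun hp2 hk hs => le_div_sub_of_mul_le_add_mul d.cast_nonneg ?_ hk hs, ?_⟩
  · obtain rfl | hp5 : p = 3 ∨ 5 ≤ p := by
      have : p ≠ 4 := by rintro rfl; norm_num at hp
      omega
    · exact mul_zetastar_three_le d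
    · exact mul_zetastar_le_of_five_le hp5 d
  · rintro rfl hk hs
    exact le_div_sub_of_mul_le_add_mul d.cast_nonneg (mul_zetastar_two_le d) hk hs

/-- If `p > 2` and `ζ*(d,p) ≥ k > 0.04` then `d ≤ 3/(k − 0.04)`;
if `p = 2` and `ζ*(d,2) ≥ k > 0.032` then `d ≤ 4/(k − 0.032)`. -/
theorem zetastar_degree_bound (p d : ℕ) (hp : p.Prime) (hd : 2 ≤ d) (k : ℝ) :
    (2 < p → k ≤ zetastar p d → 0.04 < k → (d : ℝ) ≤ 3 / (k - 0.04)) ∧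
    (p = 2 → k ≤ zetastar p d → 0.032 < k → (d : ℝ) ≤ 4 / (k - 0.032)) :=
  zetastar_degree_bound_general p d hp k
end

section
/- Let V be a finite-dimensional vector space over a field F with a bilinear form B : V × V → F, and let x be a linear automorphism of V preserving B, i.e., B(x·v, x·w) = B(v,w) for all v, w ∈ V. Let λ, μ ∈ F with λ·μ ≠ 1. Then for every v in the generalized eigenspace ker((x − λ·id)^(dim V)) and every w in the generalized eigenspace ker((x − μ·id)^(dim V)), one has B(v,w) = 0. -/
open Module

/-- If `x` preserves a bilinear form `B` on `V` and `λ·μ ≠ 1`, then the generalized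
eigenspaces of `x` for `λ` and `μ` are orthogonal with respect to `B`. -/
theorem generalized_eigenspaces_orthogonal
    {F V : Type*} [Field F] [AddCommGroup V] [Module F V] [FiniteDimensional F V]
    (B : V →ₗ[F] V →ₗ[F] F) (x : V ≃ₗ[F] V)
    (hB : ∀ v w : V, B (x v) (x w) = B v w)
    (lam mu : F) (h : lam * mu ≠ 1)
    (v w : V)
    (hv : v ∈ LinearMap.ker (((x : V →ₗ[F] V) - lam • LinearMap.id) ^ finrank F V))
    (hw : w ∈ LinearMap.ker (((x : V →ₗ[F] V) - mu • LinearMap.id) ^ finrank F V)) :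
    B v w = 0 := by
  set a : V →ₗ[F] V := (x : V →ₗ[F] V) - lam • LinearMap.id with ha
  set b : V →ₗ[F] V := (x : V →ₗ[F] V) - mu • LinearMap.id with hb
  have identity : ∀ v w : V,
      (1 - lam * mu) * B v w = B (a v) (b w) + mu * B (a v) w + lam * B v (b w) := by
    intro v w
    have hav : a v = x v - lam • v := by simp [ha]
    have hbw : b w = x w - mu • w := by simp [hb]
    rw [hav, hbw]
    simp only [map_sub, map_smul, LinearMap.sub_apply, LinearMap.smul_apply,
      smul_eq_mul, hB]
    ring
  have hne : (1 - lam * mu) ≠ 0 := fun hc => h (by linear_combination -hc)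
  have key : ∀ n p q : ℕ, p + q ≤ n → ∀ v w : V,
      (a ^ p) v = 0 → (b ^ q) w = 0 → B v w = 0 := by
    intro n
    induction n with
    | zero =>
      intro p q hpq v w hv hw
      have hp0 : p = 0 := by omega
      subst hp0
      have : v = 0 := by simpa using hv
      simp [this]
    | succ n ih =>
      intro p q hpq v w hv hw
      match p, q with
      | 0, _ =>
        have : v = 0 := by simpa using hv
        simp [this]
      | _, 0 =>
        have : w = 0 := by simpa using hw
        simp [this]
      | p' + 1, q' + 1 =>
        have hav : (a ^ p') (a v) = 0 := by
          rw [← Module.End.mul_apply, ← pow_succ]; exact hv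
        have hbw : (b ^ q') (b w) = 0 := by
          rw [← Module.End.mul_apply, ← pow_succ]; exact hw
        have h1 : B (a v) (b w) = 0 := ih p' q' (by omega) _ _ hav hbw
        have h2 : B (a v) w = 0 := ih p' (q' + 1) (by omega) _ _ hav hw
        have h3 : B v (b w) = 0 := ih (p' + 1) q' (by omega) _ _ hv hbw
        have : (1 - lam * mu) * B v w = 0 := by
          rw [identity v w, h1, h2, h3]; ring
        exact (mul_eq_zero.mp this).resolve_left hne
  exact key (finrank F V + finrank F V) (finrank F V) (finrank F V) le_rfl v w hv hw
end

section
/- Let q be a prime power and n ≥ 1. Then the number of nonzero vectors v = (v_1, ..., v_n) ∈ (𝔽_{q²})^n satisfying v_1^(q+1) + v_2^(q+1) + ... + v_n^(q+1) = 0 is (q^n − (−1)^n)·(q^(n−1) + (−1)^n). -/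
/-!
Let `|K| = q²` and let `N(n)` count all `v ∈ Kⁿ` with `∑ vᵢ^(q+1) = 0`. Every value `x^(q+1)` is
fixed by `x ↦ x^q`, and since `Kˣ` is cyclic of order `(q+1)(q-1)`, each nonzero fixed element
has exactly `q+1` preimages under `x ↦ x^(q+1)`, while `0` has one. Splitting off the first
coordinate gives `N(n+1) = N(n) + (q+1)(q^(2n) - N(n))`, solved by
`q·N(n) = q^(2n) + (-1)ⁿ qⁿ (q-1)`; the nonzero isotropic vectors number `N(n) - 1`.
-/

open Finset

theorem IsCyclic.card_pow_eq_of_pow_card_div_eq_one {G : Type*} [CommGroup G] [IsCyclic G]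
    [Fintype G] [DecidableEq G] {d : ℕ} (hd : d ∣ Nat.card G) {c : G}
    (hc : c ^ (Nat.card G / d) = 1) : #{x : G | x ^ d = c} = d := by
  have hrange : (powMonoidHom d : G →* G).range = (powMonoidHom (Nat.card G / d)).ker := by
    refine Subgroup.eq_of_le_of_card_ge ?_ ?_
    · rintro _ ⟨x, rfl⟩
      rw [MonoidHom.mem_ker, powMonoidHom_apply, powMonoidHom_apply, ← pow_mul,
        Nat.mul_div_cancel' hd, pow_card_eq_one']
    · rw [IsCyclic.card_powMonoidHom_range, IsCyclic.card_powMonoidHom_ker,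
        Nat.gcd_eq_right hd, Nat.gcd_eq_right (Nat.div_dvd_of_dvd hd)]
  have hc_range : c ∈ Set.range (powMonoidHom d : G →* G) := by
    rw [← MonoidHom.coe_range, hrange]; exact hc
  calc #{x : G | x ^ d = c} = #{x : G | powMonoidHom d x = (1 : G)} :=
        MonoidHom.card_fiber_eq_of_mem_range (powMonoidHom d) hc_range ⟨1, one_pow d⟩
    _ = Nat.card (powMonoidHom d : G →* G).ker := by
        rw [← Fintype.card_subtype, ← Nat.card_eq_fintype_card]; rfl
    _ = d := by rw [IsCyclic.card_powMonoidHom_ker, Nat.gcd_eq_right hd]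

theorem card_filter_sum_eq_zero_fin_succ {α R : Type*} [Fintype α] [AddCommGroup R]
    [DecidableEq R] (f : α → R) (n : ℕ) :
    #{v : Fin (n + 1) → α | ∑ i, f (v i) = 0} = ∑ w : Fin n → α, #{x | f x = -∑ i, f (w i)} := by
  simp only [card_filter]
  rw [← (Fin.consEquiv fun _ => α).sum_comp, Fintype.sum_prod_type_right]
  simp [Fin.sum_univ_succ, eq_neg_iff_add_eq_zero]

section

variable {K : Type*} [Field K] [Fintype K] {q : ℕ}

theorem FiniteField.exists_ringHom_eq_pow_of_card_eq_sq (hcard : Fintype.card K = q ^ 2) :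
    ∃ φ : K →+* K, ∀ x, φ x = x ^ q := by
  obtain ⟨p, _, k, hp, hpk⟩ := FiniteField.card' K
  obtain ⟨m, -, rfl⟩ := (Nat.dvd_prime_pow hp).1 (hpk ▸ hcard ▸ dvd_pow_self q two_ne_zero)
  have : Fact p.Prime := ⟨hp⟩
  exact ⟨iterateFrobenius K p m, fun _ => rfl⟩

theorem FiniteField.pow_pow_add_one_eq_of_card_eq_sq (hcard : Fintype.card K = q ^ 2) (x : K) :
    (x ^ (q + 1)) ^ q = x ^ (q + 1) := by
  rw [← pow_mul, add_one_mul, pow_add, ← sq, ← hcard, FiniteField.pow_card, pow_succ']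

theorem FiniteField.neg_sum_pow_add_one_pow_eq_of_card_eq_sq (hcard : Fintype.card K = q ^ 2)
    {ι : Type*} [Fintype ι] (v : ι → K) :
    (-∑ i, v i ^ (q + 1)) ^ q = -∑ i, v i ^ (q + 1) := by
  obtain ⟨φ, hφ⟩ := exists_ringHom_eq_pow_of_card_eq_sq hcard
  rw [← hφ, map_neg, map_sum]
  simp only [hφ, pow_pow_add_one_eq_of_card_eq_sq hcard]

variable [DecidableEq K]

theorem FiniteField.card_units_pow_add_one_eq_of_card_eq_sq (hcard : Fintype.card K = q ^ 2)
    {c : Kˣ} (hc : c ^ q = c) : #{x : Kˣ | x ^ (q + 1) = c} = q + 1 := by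
  have hq : 1 ≤ q := Nat.one_le_iff_ne_zero.2 fun h => by simp [h] at hcard
  have hunits : Nat.card Kˣ = (q + 1) * (q - 1) := by
    rw [Nat.card_eq_fintype_card, Fintype.card_units, hcard]
    simpa using Nat.sq_sub_sq q 1
  apply IsCyclic.card_pow_eq_of_pow_card_div_eq_one ⟨q - 1, hunits⟩
  rw [hunits, Nat.mul_div_cancel_left _ q.succ_pos]
  exact mul_right_cancel (b := c) (by rw [← pow_succ, Nat.sub_add_cancel hq, hc, one_mul])

theorem FiniteField.card_pow_add_one_eq_of_card_eq_sq (hcard : Fintype.card K = q ^ 2)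
    {c : K} (hc : c ^ q = c) :
    #{x : K | x ^ (q + 1) = c} = if c = 0 then 1 else q + 1 := by
  split_ifs with hc0
  · simp [hc0, filter_eq']
  have hcu : Units.mk0 c hc0 ^ q = Units.mk0 c hc0 := Units.ext (by simpa using hc)
  calc #{x : K | x ^ (q + 1) = c}
      = #(({u : Kˣ | u ^ (q + 1) = Units.mk0 c hc0} : Finset Kˣ).map
          ⟨Units.val, Units.val_injective⟩) := by
        congr 1
        ext x
        simp only [mem_filter, mem_univ, true_and, mem_map, Function.Embedding.coeFn_mk,
          Units.ext_iff, Units.val_pow_eq_pow_val, Units.val_mk0]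
        constructor
        · rintro rfl
          have hx0 : x ≠ 0 := by rintro rfl; simp at hc0
          exact ⟨Units.mk0 x hx0, rfl, rfl⟩
        · rintro ⟨u, hu, rfl⟩
          exact hu
    _ = q + 1 := by rw [card_map, card_units_pow_add_one_eq_of_card_eq_sq hcard hcu]

variable (K q) in
def isotropicVectors (n : ℕ) : Finset (Fin n → K) :=
  {v | ∑ i, v i ^ (q + 1) = 0}

theorem card_isotropicVectors_succ (hcard : Fintype.card K = q ^ 2) (n : ℕ) :
    (#(isotropicVectors K q (n + 1)) : ℤ) =
      (q + 1) * q ^ (2 * n) - q * #(isotropicVectors K q n) := by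
  rw [isotropicVectors, isotropicVectors, card_filter_sum_eq_zero_fin_succ (· ^ (q + 1))]
  simp only [FiniteField.card_pow_add_one_eq_of_card_eq_sq hcard
    (FiniteField.neg_sum_pow_add_one_pow_eq_of_card_eq_sq hcard _), neg_eq_zero]
  have hsplit : ∀ w : Fin n → K, ((if ∑ i, w i ^ (q + 1) = 0 then 1 else q + 1 : ℕ) : ℤ) =
      (q + 1) - q * if ∑ i, w i ^ (q + 1) = 0 then 1 else 0 := fun w => by
    split_ifs <;> push_cast <;> ring
  rw [Nat.cast_sum, sum_congr rfl fun w _ => hsplit w, sum_sub_distrib, ← mul_sum, sum_boole,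
    sum_const, card_univ, Fintype.card_fun, Fintype.card_fin, hcard]
  ring

theorem mul_card_isotropicVectors (hcard : Fintype.card K = q ^ 2) (n : ℕ) :
    (q * #(isotropicVectors K q n) : ℤ) = q ^ (2 * n) + (-1) ^ n * q ^ n * (q - 1) := by
  induction n with
  | zero => simp [isotropicVectors]
  | succ n ih =>
    rw [card_isotropicVectors_succ hcard]
    linear_combination (-(q : ℤ)) * ih

end

theorem count_singular_vectors_hermitian_general
    {K : Type*} [Field K] [Fintype K]
    (q : ℕ) (hcard : Fintype.card K = q ^ 2)
    (n : ℕ) :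
    (Nat.card {v : Fin n → K // v ≠ 0 ∧ ∑ i, (v i) ^ (q + 1) = 0} : ℤ) =
      ((q : ℤ) ^ n - (-1) ^ n) * ((q : ℤ) ^ (n - 1) + (-1) ^ n) := by
  classical
  have hq0 : (q : ℤ) ≠ 0 := by rintro h; simp_all
  have hzero : Nat.card {v : Fin n → K // v ≠ 0 ∧ ∑ i, (v i) ^ (q + 1) = 0} + 1 =
      #(isotropicVectors K q n) := by
    rw [Nat.card_eq_fintype_card, Fintype.card_subtype,
      ← card_erase_add_one (s := isotropicVectors K q n) (a := 0) (by simp [isotropicVectors])]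
    congr 2
    ext v
    simp [isotropicVectors, and_comm]
  have key := mul_card_isotropicVectors hcard n
  rw [← hzero] at key
  apply mul_left_cancel₀ hq0
  rcases n with _ | m
  · simp at key ⊢
  · have hsq : ((-1 : ℤ) ^ (m + 1)) ^ 2 = 1 := by rw [← pow_mul, mul_comm, pow_mul]; simp
    push_cast at key
    rw [Nat.add_sub_cancel]
    linear_combination key + q * hsq

/-- The number of nonzero isotropic vectors of the standard hermitian form on
`(𝔽_{q²})^n`, i.e. nonzero `v` with `v₁^(q+1) + ⋯ + v_n^(q+1) = 0`, is
`(q^n − (−1)^n)·(q^(n−1) + (−1)^n)`. -/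
theorem count_singular_vectors_hermitian
    {K : Type*} [Field K] [Fintype K]
    (q : ℕ) (hq : IsPrimePow q) (hcard : Fintype.card K = q ^ 2)
    (n : ℕ) (hn : 1 ≤ n) :
    (Nat.card {v : Fin n → K // v ≠ 0 ∧ ∑ i, (v i) ^ (q + 1) = 0} : ℤ) =
      ((q : ℤ) ^ n - (-1) ^ n) * ((q : ℤ) ^ (n - 1) + (-1) ^ n) :=
  count_singular_vectors_hermitian_general q hcard n
end

section
/- The group presented by two generators a, b subject to the relations a² = 1, b³ = 1, (a·b)⁵ = 1 is isomorphic to the alternating group Alt_5; in particular it has order 60. -/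
/-!
Put `c = ab`; then `a² = c⁵ = (ac)³ = 1`, and `b = ac` since `a = a⁻¹`. Enumerating cosets of
`H = ⟨c⟩`, the set `H ∪ HaH ∪ H(ac²a)H ∪ H(ac²ac³a)` contains `1` and is stable under right
multiplication by `a` and `c`, hence is the whole group, which therefore has at most
`5 + 25 + 25 + 5 = 60` elements. The stability comes down to a handful of word identities, all
derived from `aca = c⁴ac⁴`, i.e. from `(ac)³ = 1`.

The homomorphism `a ↦ (0 1)(2 3)`, `b ↦ (0 2 4)` to `A₅` is onto: its image contains elements of
orders `2`, `3` and `5`, so it has index at most `2`, and `A₅` is simple. Comparing orders, it is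
an isomorphism.
-/

/-- The relations `a² = 1`, `b³ = 1`, `(ab)⁵ = 1` of the (2,3,5) triangle group,
on the two generators `a = of true`, `b = of false` of the free group on `Bool`. -/
def rels235 : Set (FreeGroup Bool) :=
  {FreeGroup.of true ^ 2, FreeGroup.of false ^ 3,
    (FreeGroup.of true * FreeGroup.of false) ^ 5}

open Subgroup DoubleCoset Pointwise

section General

variable {G : Type*} [Group G]

theorem exists_pow_eq_of_mem_zpowers {c h : G} {n : ℕ} (hn : 0 < n) (hc : c ^ n = 1)
    (hh : h ∈ zpowers c) : ∃ k < n, c ^ k = h := by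
  obtain ⟨k, rfl⟩ := mem_zpowers_iff.1 hh
  have h₀ : 0 ≤ k % n := Int.emod_nonneg k (by omega)
  have h₁ : k % n < n := Int.emod_lt_of_pos k (by omega)
  refine ⟨(k % n).toNat, by omega, ?_⟩
  rw [← zpow_natCast, Int.toNat_of_nonneg h₀]
  exact (zpow_eq_zpow_emod' k hc).symm

theorem ncard_doubleCoset_le (x : G) (s t : Set G) :
    (doubleCoset x s t).ncard ≤ s.ncard * t.ncard :=
  calc (doubleCoset x s t).ncard ≤ (s * {x}).ncard * t.ncard := Set.natCard_mul_le
    _ ≤ s.ncard * ({x} : Set G).ncard * t.ncard := Nat.mul_le_mul_right _ Set.natCard_mul_le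
    _ = s.ncard * t.ncard := by rw [Set.ncard_singleton, mul_one]

theorem finite_doubleCoset (x : G) {s t : Set G} (hs : s.Finite) (ht : t.Finite) :
    (doubleCoset x s t).Finite := by
  rw [doubleCoset_eq_image2]
  exact hs.image2 _ ht

theorem prime_dvd_natCard_of_mem {K : Subgroup G} {x : G} {p : ℕ} [Fact p.Prime] (hx : x ∈ K)
    (hxp : x ^ p = 1) (hx1 : x ≠ 1) : p ∣ Nat.card K :=
  orderOf_eq_prime hxp hx1 ▸ K.orderOf_dvd_natCard hx

end General

namespace Icosahedral

variable {G : Type*} [Group G] {a c : G}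

theorem inv_eq_self (ha : a ^ 2 = 1) : a⁻¹ = a :=
  inv_eq_of_mul_eq_one_right (by rw [← sq, ha])

theorem inv_eq_pow_four (hc : c ^ 5 = 1) : c⁻¹ = c ^ 4 :=
  inv_eq_of_mul_eq_one_left (by rw [← pow_succ, hc])

theorem mul_self (ha : a ^ 2 = 1) : a * a = 1 := by
  rw [← sq, ha]

/- Right-associated cancellation rules, so that `simp` with `mul_assoc` and `pow_succ` normalises
words in `a` and `c` modulo `a² = c⁵ = 1`. -/
theorem mul_mul_cancel (ha : a ^ 2 = 1) (x : G) : a * (a * x) = x := by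
  rw [← mul_assoc, mul_self ha, one_mul]

theorem pow_five_mul (hc : c ^ 5 = 1) (x : G) : c * (c * (c * (c * (c * x)))) = x := by
  simpa only [pow_succ, pow_zero, one_mul, mul_assoc] using congrArg (· * x) hc

theorem aca (ha : a ^ 2 = 1) (hc : c ^ 5 = 1) (hac : (a * c) ^ 3 = 1) :
    a * c * a = c ^ 4 * a * c ^ 4 := by
  have h : a * c * a * (c * a * c) = 1 := by
    rw [← hac]; simp only [pow_succ, pow_zero, one_mul, mul_assoc]
  rw [eq_inv_of_mul_eq_one_left h]
  simp only [mul_inv_rev, inv_eq_self ha, inv_eq_pow_four hc, mul_assoc]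

theorem ac4a (ha : a ^ 2 = 1) (hc : c ^ 5 = 1) (hac : (a * c) ^ 3 = 1) :
    a * c ^ 4 * a = c * a * c := by
  calc a * c ^ 4 * a = c * a * c * (c ^ 4 * a * c ^ 4) * (a * c ^ 4 * a) := by
        simp only [mul_assoc, pow_succ, pow_zero, one_mul, mul_mul_cancel ha, pow_five_mul hc]
    _ = c * a * c * (a * c * a) * (a * c ^ 4 * a) := by rw [aca ha hc hac]
    _ = c * a * c := by
        simp only [mul_assoc, pow_succ, pow_zero, one_mul, mul_mul_cancel ha, pow_five_mul hc,
          mul_self ha, mul_one]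

theorem ac3a (ha : a ^ 2 = 1) (hc : c ^ 5 = 1) (hac : (a * c) ^ 3 = 1) :
    a * c ^ 3 * a = c * (a * c ^ 2 * a) * c := by
  calc a * c ^ 3 * a = (a * c ^ 4 * a) * (a * c ^ 4 * a) := by
        simp only [mul_assoc, pow_succ, pow_zero, one_mul, mul_mul_cancel ha, pow_five_mul hc]
    _ = c * (a * c ^ 2 * a) * c := by
        rw [ac4a ha hc hac]
        simp only [mul_assoc, pow_succ, pow_zero, one_mul]

theorem ac2aca (ha : a ^ 2 = 1) (hc : c ^ 5 = 1) (hac : (a * c) ^ 3 = 1) :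
    a * c ^ 2 * a * c * a = c ^ 4 * a * c ^ 3 := by
  calc a * c ^ 2 * a * c * a = a * c ^ 2 * (c ^ 4 * a * c ^ 4) := by
        rw [← aca ha hc hac]; simp only [mul_assoc]
    _ = a * c * a * c ^ 4 := by simp only [mul_assoc, pow_succ, pow_zero, one_mul, pow_five_mul hc]
    _ = c ^ 4 * a * c ^ 3 := by
        rw [aca ha hc hac]; simp only [mul_assoc, pow_succ, pow_zero, one_mul, pow_five_mul hc]

theorem ac2ac2a (ha : a ^ 2 = 1) (hc : c ^ 5 = 1) (hac : (a * c) ^ 3 = 1) :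
    a * c ^ 2 * a * c ^ 2 * a = c ^ 4 * (a * c ^ 2 * a) * c ^ 4 := by
  calc a * c ^ 2 * a * c ^ 2 * a = c ^ 4 * (c * (a * c ^ 2 * a) * c) * c ^ 4 * c ^ 2 * a := by
        simp only [mul_assoc, pow_succ, pow_zero, one_mul, pow_five_mul hc]
    _ = c ^ 4 * a * c ^ 3 * (a * c * a) := by
        rw [← ac3a ha hc hac]; simp only [mul_assoc, pow_succ, pow_zero, one_mul, pow_five_mul hc]
    _ = c ^ 4 * (a * c ^ 2 * a) * c ^ 4 := by
        rw [aca ha hc hac]; simp only [mul_assoc, pow_succ, pow_zero, one_mul, pow_five_mul hc]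

theorem ac2ac4a (ha : a ^ 2 = 1) (hc : c ^ 5 = 1) (hac : (a * c) ^ 3 = 1) :
    a * c ^ 2 * a * c ^ 4 * a = c * (a * c ^ 2 * a) * c ^ 2 := by
  calc a * c ^ 2 * a * c ^ 4 * a = a * c ^ 2 * (a * c ^ 4 * a) := by simp only [mul_assoc]
    _ = a * c ^ 3 * a * c := by
        rw [ac4a ha hc hac]; simp only [mul_assoc, pow_succ, pow_zero, one_mul]
    _ = c * (a * c ^ 2 * a) * c ^ 2 := by
        rw [ac3a ha hc hac]; simp only [mul_assoc, pow_succ, pow_zero, one_mul]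

theorem c_mul_ac2ac3a_mul_c (ha : a ^ 2 = 1) (hc : c ^ 5 = 1) (hac : (a * c) ^ 3 = 1) :
    c * (a * c ^ 2 * a * c ^ 3 * a) * c = a * c ^ 2 * a * c ^ 3 * a := by
  calc c * (a * c ^ 2 * a * c ^ 3 * a) * c = c * (a * c ^ 2 * a) * c * (c ^ 2 * a * c) := by
        simp only [mul_assoc, pow_succ, pow_zero, one_mul]
    _ = a * c ^ 3 * a * (c ^ 2 * a * c) := by rw [ac3a ha hc hac]
    _ = a * c ^ 2 * (c * (a * c ^ 2 * a) * c) := by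
        simp only [mul_assoc, pow_succ, pow_zero, one_mul]
    _ = a * c ^ 2 * (a * c ^ 3 * a) := by rw [ac3a ha hc hac]
    _ = a * c ^ 2 * a * c ^ 3 * a := by simp only [mul_assoc]

theorem ac2ac3ac (ha : a ^ 2 = 1) (hc : c ^ 5 = 1) (hac : (a * c) ^ 3 = 1) :
    a * c ^ 2 * a * c ^ 3 * a * c = c ^ 4 * (a * c ^ 2 * a * c ^ 3 * a) := by
  calc a * c ^ 2 * a * c ^ 3 * a * c = c ^ 4 * (c * (a * c ^ 2 * a * c ^ 3 * a) * c) := by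
        simp only [mul_assoc, pow_succ, pow_zero, one_mul, pow_five_mul hc]
    _ = c ^ 4 * (a * c ^ 2 * a * c ^ 3 * a) := by rw [c_mul_ac2ac3a_mul_c ha hc hac]

def normalForms (a c : G) : Set G :=
  (zpowers c : Set G) ∪ doubleCoset a (zpowers c) (zpowers c) ∪
    doubleCoset (a * c ^ 2 * a) (zpowers c) (zpowers c) ∪
    (zpowers c : Set G) * {a * c ^ 2 * a * c ^ 3 * a}

section normalForms

variable {g h h₁ h₂ : G}

theorem mem_normalForms_of_mem_zpowers (hg : g ∈ zpowers c) : g ∈ normalForms a c :=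
  .inl <| .inl <| .inl hg

theorem mul_a_mul_mem_normalForms (hh₁ : h₁ ∈ zpowers c) (hh₂ : h₂ ∈ zpowers c) :
    h₁ * a * h₂ ∈ normalForms a c :=
  .inl <| .inl <| .inr <| mem_doubleCoset.2 ⟨_, hh₁, _, hh₂, rfl⟩

theorem mul_ac2a_mul_mem_normalForms (hh₁ : h₁ ∈ zpowers c) (hh₂ : h₂ ∈ zpowers c) :
    h₁ * (a * c ^ 2 * a) * h₂ ∈ normalForms a c :=
  .inl <| .inr <| mem_doubleCoset.2 ⟨_, hh₁, _, hh₂, rfl⟩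

theorem mul_ac2ac3a_mem_normalForms (hh : h ∈ zpowers c) :
    h * (a * c ^ 2 * a * c ^ 3 * a) ∈ normalForms a c :=
  .inr <| Set.mul_mem_mul hh rfl

theorem mul_mem_normalForms (hh : h ∈ zpowers c) (hg : g ∈ normalForms a c) :
    h * g ∈ normalForms a c := by
  rcases hg with ((hg | hg) | hg) | ⟨h', hh', _, rfl, rfl⟩
  · exact mem_normalForms_of_mem_zpowers (mul_mem hh hg)
  · obtain ⟨h₁, hh₁, h₂, hh₂, rfl⟩ := mem_doubleCoset.1 hg
    simpa only [mul_assoc] using mul_a_mul_mem_normalForms (mul_mem hh hh₁) hh₂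
  · obtain ⟨h₁, hh₁, h₂, hh₂, rfl⟩ := mem_doubleCoset.1 hg
    simpa only [mul_assoc] using mul_ac2a_mul_mem_normalForms (mul_mem hh hh₁) hh₂
  · simpa only [mul_assoc] using mul_ac2ac3a_mem_normalForms (a := a) (mul_mem hh hh')

end normalForms

theorem a_mul_pow_mul_a_mem_normalForms (ha : a ^ 2 = 1) (hc : c ^ 5 = 1)
    (hac : (a * c) ^ 3 = 1) {k : ℕ} (hk : k < 5) : a * c ^ k * a ∈ normalForms a c := by
  have hc' : c ∈ zpowers c := mem_zpowers c
  interval_cases k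
  · rw [pow_zero, mul_one, mul_self ha]
    exact mem_normalForms_of_mem_zpowers (one_mem _)
  · rw [pow_one, aca ha hc hac]
    exact mul_a_mul_mem_normalForms (pow_mem hc' 4) (pow_mem hc' 4)
  · simpa using mul_ac2a_mul_mem_normalForms (a := a) (one_mem (zpowers c)) (one_mem _)
  · rw [ac3a ha hc hac]
    exact mul_ac2a_mul_mem_normalForms hc' hc'
  · rw [ac4a ha hc hac]
    exact mul_a_mul_mem_normalForms hc' hc'

theorem ac2a_mul_pow_mul_a_mem_normalForms (ha : a ^ 2 = 1) (hc : c ^ 5 = 1)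
    (hac : (a * c) ^ 3 = 1) {k : ℕ} (hk : k < 5) :
    a * c ^ 2 * a * c ^ k * a ∈ normalForms a c := by
  have hc' : c ∈ zpowers c := mem_zpowers c
  interval_cases k
  · simpa [mul_assoc, mul_self ha] using
      mul_a_mul_mem_normalForms (a := a) (one_mem (zpowers c)) (pow_mem hc' 2)
  · rw [pow_one, ac2aca ha hc hac]
    exact mul_a_mul_mem_normalForms (pow_mem hc' 4) (pow_mem hc' 3)
  · rw [ac2ac2a ha hc hac]
    exact mul_ac2a_mul_mem_normalForms (pow_mem hc' 4) (pow_mem hc' 4)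
  · simpa using mul_ac2ac3a_mem_normalForms (a := a) (one_mem (zpowers c))
  · rw [ac2ac4a ha hc hac]
    exact mul_ac2a_mul_mem_normalForms hc' (pow_mem hc' 2)

theorem mul_c_mem_normalForms (ha : a ^ 2 = 1) (hc : c ^ 5 = 1) (hac : (a * c) ^ 3 = 1) {g : G}
    (hg : g ∈ normalForms a c) : g * c ∈ normalForms a c := by
  have hc' : c ∈ zpowers c := mem_zpowers c
  rcases hg with ((hg | hg) | hg) | ⟨h, hh, _, rfl, rfl⟩
  · exact mem_normalForms_of_mem_zpowers (mul_mem hg hc')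
  · obtain ⟨h₁, hh₁, h₂, hh₂, rfl⟩ := mem_doubleCoset.1 hg
    simpa only [mul_assoc] using mul_a_mul_mem_normalForms hh₁ (mul_mem hh₂ hc')
  · obtain ⟨h₁, hh₁, h₂, hh₂, rfl⟩ := mem_doubleCoset.1 hg
    simpa only [mul_assoc] using mul_ac2a_mul_mem_normalForms hh₁ (mul_mem hh₂ hc')
  · rw [mul_assoc, ac2ac3ac ha hc hac, ← mul_assoc]
    exact mul_ac2ac3a_mem_normalForms (mul_mem hh (pow_mem hc' 4))

theorem mul_a_mem_normalForms (ha : a ^ 2 = 1) (hc : c ^ 5 = 1) (hac : (a * c) ^ 3 = 1) {g : G}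
    (hg : g ∈ normalForms a c) : g * a ∈ normalForms a c := by
  rcases hg with ((hg | hg) | hg) | ⟨h, hh, _, rfl, rfl⟩
  · simpa using mul_a_mul_mem_normalForms hg (one_mem (zpowers c))
  · obtain ⟨h₁, hh₁, h₂, hh₂, rfl⟩ := mem_doubleCoset.1 hg
    obtain ⟨k, hk, rfl⟩ := exists_pow_eq_of_mem_zpowers (by norm_num) hc hh₂
    simpa only [mul_assoc] using
      mul_mem_normalForms hh₁ (a_mul_pow_mul_a_mem_normalForms ha hc hac hk)
  · obtain ⟨h₁, hh₁, h₂, hh₂, rfl⟩ := mem_doubleCoset.1 hg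
    obtain ⟨k, hk, rfl⟩ := exists_pow_eq_of_mem_zpowers (by norm_num) hc hh₂
    simpa only [mul_assoc] using
      mul_mem_normalForms hh₁ (ac2a_mul_pow_mul_a_mem_normalForms ha hc hac hk)
  · have ht : a * c ^ 2 * a * c ^ 3 * a * a = 1 * (a * c ^ 2 * a) * c ^ 3 := by
      rw [mul_assoc _ a a, mul_self ha, mul_one, one_mul]
    rw [mul_assoc, ht]
    exact mul_mem_normalForms hh
      (mul_ac2a_mul_mem_normalForms (one_mem _) (pow_mem (mem_zpowers c) 3))

theorem closure_subset_normalForms (ha : a ^ 2 = 1) (hc : c ^ 5 = 1) (hac : (a * c) ^ 3 = 1) :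
    (closure {a, c} : Set G) ⊆ normalForms a c := by
  intro g hg
  induction hg using closure_induction_right with
  | one => exact mem_normalForms_of_mem_zpowers (one_mem _)
  | mul_right x _ y hy hx =>
    rcases hy with hy | hy <;> rw [hy]
    · exact mul_a_mem_normalForms ha hc hac hx
    · exact mul_c_mem_normalForms ha hc hac hx
  | mul_inv_cancel x _ y hy hx =>
    rcases hy with hy | hy <;> rw [hy]
    · rw [inv_eq_self ha]
      exact mul_a_mem_normalForms ha hc hac hx
    · rw [inv_eq_pow_four hc]
      simp only [pow_succ, pow_zero, one_mul, ← mul_assoc]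
      iterate 4 apply mul_c_mem_normalForms ha hc hac
      exact hx

theorem ncard_normalForms_le (hc : c ^ 5 = 1) : (normalForms a c).ncard ≤ 60 := by
  rw [normalForms]
  set H := (zpowers c : Set G)
  have hH : H.ncard ≤ 5 := by
    rw [← Nat.card_coe_set_eq, SetLike.coe_sort_coe, Nat.card_zpowers]
    exact orderOf_le_of_pow_eq_one (by norm_num) hc
  have hHH := Nat.mul_le_mul hH hH
  have ht : (H * {a * c ^ 2 * a * c ^ 3 * a}).ncard = H.ncard := by
    rw [Set.mul_singleton, Set.ncard_image_of_injective _ (mul_left_injective _)]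
  have ha := ncard_doubleCoset_le a H H
  have hu := ncard_doubleCoset_le (a * c ^ 2 * a) H H
  have h₃ := Set.ncard_union_le (H ∪ doubleCoset a H H ∪ doubleCoset (a * c ^ 2 * a) H H)
    (H * {a * c ^ 2 * a * c ^ 3 * a})
  have h₂ := Set.ncard_union_le (H ∪ doubleCoset a H H) (doubleCoset (a * c ^ 2 * a) H H)
  have h₁ := Set.ncard_union_le H (doubleCoset a H H)
  linarith

theorem finite_normalForms (hc : c ^ 5 = 1) : (normalForms a c).Finite := by
  have hH : (zpowers c : Set G).Finite :=
    finite_zpowers.2 (isOfFinOrder_iff_pow_eq_one.2 ⟨5, by norm_num, hc⟩)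
  exact ((hH.union (finite_doubleCoset _ hH hH)).union (finite_doubleCoset _ hH hH)).union
    (hH.mul (Set.finite_singleton _))

theorem finite_closure (ha : a ^ 2 = 1) (hc : c ^ 5 = 1) (hac : (a * c) ^ 3 = 1) :
    (closure {a, c} : Set G).Finite :=
  (finite_normalForms hc).subset (closure_subset_normalForms ha hc hac)

theorem ncard_closure_le (ha : a ^ 2 = 1) (hc : c ^ 5 = 1) (hac : (a * c) ^ 3 = 1) :
    (closure {a, c} : Set G).ncard ≤ 60 :=
  (Set.ncard_le_ncard (closure_subset_normalForms ha hc hac) (finite_normalForms hc)).trans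
    (ncard_normalForms_le hc)

end Icosahedral

namespace alternatingGroup

theorem natCard_fin_five : Nat.card (alternatingGroup (Fin 5)) = 60 := by
  rw [nat_card_alternatingGroup, Nat.card_fin]; rfl

theorem eq_top_of_thirty_dvd_natCard {K : Subgroup (alternatingGroup (Fin 5))}
    (hK : 30 ∣ Nat.card K) : K = ⊤ := by
  have hmul := K.card_mul_index
  rw [natCard_fin_five] at hmul
  obtain ⟨m, hm⟩ := hK
  have hindex : K.index ∣ 2 := ⟨m, by rw [hm] at hmul; linarith⟩
  rcases (Nat.dvd_prime Nat.prime_two).1 hindex with h | h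
  · exact Subgroup.index_eq_one.1 h
  · refine (IsSimpleGroup.eq_bot_or_eq_top_of_normal K (normal_of_index_eq_two h)).resolve_left ?_
    rintro rfl
    rw [Subgroup.index_bot, natCard_fin_five] at h
    omega

end alternatingGroup

namespace VonDyck235

open PresentedGroup Equiv

theorem of_true_sq : (of true : PresentedGroup rels235) ^ 2 = 1 :=
  one_of_mem (x := FreeGroup.of true ^ 2) (by simp [rels235])

theorem of_false_cube : (of false : PresentedGroup rels235) ^ 3 = 1 :=
  one_of_mem (x := FreeGroup.of false ^ 3) (by simp [rels235])

theorem of_mul_of_pow_five : (of true * of false : PresentedGroup rels235) ^ 5 = 1 :=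
  one_of_mem (x := (FreeGroup.of true * FreeGroup.of false) ^ 5) (by simp [rels235])

theorem of_mul_of_mul_of_pow_three :
    (of true * (of true * of false) : PresentedGroup rels235) ^ 3 = 1 := by
  rw [← mul_assoc, ← sq, of_true_sq, one_mul, of_false_cube]

theorem closure_of_true_of_mul_of_eq_top :
    closure {of true, of true * of false} = (⊤ : Subgroup (PresentedGroup rels235)) := by
  have ha : of true ∈ closure {of true, (of true * of false : PresentedGroup rels235)} :=
    subset_closure (Set.mem_insert _ _)
  have hab : of true * of false ∈ closure {of true, (of true * of false : PresentedGroup rels235)} :=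
    subset_closure (Set.mem_insert_of_mem _ rfl)
  rw [eq_top_iff, ← closure_range_of, closure_le]
  rintro _ ⟨x, rfl⟩
  cases x
  · simpa using mul_mem (inv_mem ha) hab
  · exact ha

instance : Finite (PresentedGroup rels235) := by
  have := Icosahedral.finite_closure of_true_sq of_mul_of_pow_five of_mul_of_mul_of_pow_three
  rw [closure_of_true_of_mul_of_eq_top, coe_top] at this
  exact Set.finite_univ_iff.1 this

theorem natCard_le : Nat.card (PresentedGroup rels235) ≤ 60 := by
  have := Icosahedral.ncard_closure_le of_true_sq of_mul_of_pow_five of_mul_of_mul_of_pow_three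
  rwa [closure_of_true_of_mul_of_eq_top, coe_top, Set.ncard_univ] at this

def permA : alternatingGroup (Fin 5) :=
  ⟨swap 0 1 * swap 2 3, by rw [Perm.mem_alternatingGroup]; decide⟩

def permB : alternatingGroup (Fin 5) :=
  ⟨swap 0 2 * swap 2 4, by rw [Perm.mem_alternatingGroup]; decide⟩

def toAlternatingGroup : PresentedGroup rels235 →* alternatingGroup (Fin 5) :=
  toGroup (f := fun x => bif x then permA else permB) <| by
    rintro r (rfl | rfl | rfl) <;>
      simp only [map_pow, map_mul, FreeGroup.lift_apply_of, cond_true, cond_false] <;> decide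

theorem toAlternatingGroup_surjective : Function.Surjective toAlternatingGroup := by
  have hA : permA ∈ toAlternatingGroup.range := ⟨of true, toGroup.of _⟩
  have hB : permB ∈ toAlternatingGroup.range := ⟨of false, toGroup.of _⟩
  have : Fact (Nat.Prime 5) := ⟨by norm_num⟩
  have h2 := prime_dvd_natCard_of_mem (p := 2) hA (by decide) (by decide)
  have h3 := prime_dvd_natCard_of_mem (p := 3) hB (by decide) (by decide)
  have h5 := prime_dvd_natCard_of_mem (p := 5) (mul_mem hA hB) (by decide) (by decide)
  exact MonoidHom.range_eq_top.1 (alternatingGroup.eq_top_of_thirty_dvd_natCard (by omega))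

end VonDyck235

/-- The group presented by `⟨a, b ∣ a² = b³ = (ab)⁵ = 1⟩` is isomorphic to the
alternating group `Alt₅`; in particular it has order `60`. -/
theorem presentedGroup_235_iso_alternatingGroup :
    Nonempty (PresentedGroup rels235 ≃* alternatingGroup (Fin 5)) ∧
    Nat.card (PresentedGroup rels235) = 60 := by
  have hsurj := VonDyck235.toAlternatingGroup_surjective
  have hcard : Nat.card (PresentedGroup rels235) = 60 :=
    VonDyck235.natCard_le.antisymm <|
      alternatingGroup.natCard_fin_five ▸ Nat.card_le_card_of_surjective _ hsurj
  refine ⟨⟨MulEquiv.ofBijective VonDyck235.toAlternatingGroup ?_⟩, hcard⟩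
  exact (Nat.bijective_iff_surjective_and_card _).2
    ⟨hsurj, hcard.trans alternatingGroup.natCard_fin_five.symm⟩
end

section
/- Let x be a permutation of a finite set Ω with |Ω| = N, let d be the order of x, and define Ind(x) = N − (number of orbits of the cyclic group ⟨x⟩ on Ω). Suppose that for every divisor k of d with k < d one has |Fix(x^k)| ≤ F_k, where Fix(x^k) is the set of points of Ω fixed by x^k. Then Ind(x) ≥ ( (d−1)·N − Σ_{k ∣ d, k < d} φ(d/k)·F_k ) / d, where φ is Euler's totient function. -/
/-!
Burnside's lemma for `⟨x⟩` gives `#orbits · d = Σ_{j < d} |Fix(x^j)|`. A point is fixed by `x^j`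
iff its period divides `j`, and the period divides `d`, so `Fix(x^j) = Fix(x^gcd(d, j))`;
grouping the `j < d` by `k = gcd(d, j)`, of which there are `φ(d/k)`, turns the sum into
`N + Σ_{k ∣ d, k < d} φ(d/k) |Fix(x^k)|`, which is at most `N + Σ φ(d/k) F_k`.
-/

open Finset MulAction Subgroup
open scoped Nat

namespace Nat

theorem sum_range_comp_gcd {M : Type*} [AddCommMonoid M] (n : ℕ) (f : ℕ → M) :
    ∑ j ∈ range n, f (n.gcd j) = ∑ k ∈ n.divisors, φ (n / k) • f k := by
  rcases n.eq_zero_or_pos with rfl | hn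
  · simp
  rw [← sum_fiberwise_of_maps_to fun j _ => mem_divisors.2 ⟨n.gcd_dvd_left j, hn.ne'⟩]
  refine sum_congr rfl fun k hk => ?_
  rw [sum_congr rfl fun j hj => congrArg f (mem_filter.1 hj).2, sum_const,
    ← totient_div_of_dvd (dvd_of_mem_divisors hk)]

theorem filter_lt_divisors (n : ℕ) : n.divisors.filter (· < n) = n.properDivisors := by
  ext k
  simp only [mem_filter, mem_divisors, mem_properDivisors]
  exact ⟨fun ⟨⟨hk, _⟩, hlt⟩ => ⟨hk, hlt⟩, fun ⟨hk, hlt⟩ => ⟨⟨hk, by omega⟩, hlt⟩⟩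

end Nat

namespace MulAction

variable {G α : Type*}

theorem fixedBy_pow_gcd_orderOf [Monoid G] [MulAction G α] (g : G) (n : ℕ) :
    fixedBy α (g ^ (orderOf g).gcd n) = fixedBy α (g ^ n) := by
  ext a
  simp only [mem_fixedBy, pow_smul_eq_iff_period_dvd, Nat.dvd_gcd_iff, period_dvd_orderOf,
    true_and]

variable [Group G] [MulAction G α] [Finite α]

theorem sum_range_card_fixedBy_pow {g : G} (hg : IsOfFinOrder g) :
    ∑ j ∈ range (orderOf g), Nat.card (fixedBy α (g ^ j)) =
      Nat.card (orbitRel.Quotient (zpowers g) α) * orderOf g := by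
  classical
  have := Fintype.ofFinite α
  have := Fintype.ofEquiv _ (finEquivZPowers hg)
  have burnside := sum_card_fixedBy_eq_card_orbits_mul_card_group (zpowers g) α
  simp only [Fintype.card_eq_nat_card, Nat.card_zpowers] at burnside
  rw [← burnside, ← Fin.sum_univ_eq_sum_range]
  exact Fintype.sum_equiv (finEquivZPowers hg) _ _ fun _ => rfl

theorem card_orbits_zpowers_mul_orderOf {g : G} (hg : IsOfFinOrder g) :
    Nat.card (orbitRel.Quotient (zpowers g) α) * orderOf g =
      ∑ k ∈ (orderOf g).divisors, φ (orderOf g / k) * Nat.card (fixedBy α (g ^ k)) := by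
  rw [← sum_range_card_fixedBy_pow hg]
  simp_rw [← smul_eq_mul, ← Nat.sum_range_comp_gcd, fixedBy_pow_gcd_orderOf]

end MulAction

/-- Lower bound on the index of a permutation: if `x` is a permutation of a finite set
`Ω` of size `N`, of order `d`, with `Ind(x) = N − #orbits of ⟨x⟩ on Ω`, and
`|Fix(x^k)| ≤ F_k` for every proper divisor `k` of `d`, then
`Ind(x) ≥ ((d−1)·N − Σ_{k ∣ d, k < d} φ(d/k)·F_k)/d`. -/
theorem index_lower_bound
    {Ω : Type*} [Fintype Ω]
    (x : Equiv.Perm Ω) (N d : ℕ)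
    (hN : N = Fintype.card Ω) (hd : d = orderOf x)
    (Ind : ℤ)
    (hInd : Ind = (N : ℤ) -
      Nat.card (MulAction.orbitRel.Quotient (Subgroup.zpowers x) Ω))
    (Fb : ℕ → ℕ)
    (hF : ∀ k, k ∣ d → k < d → Nat.card {ω : Ω // (x ^ k) ω = ω} ≤ Fb k) :
    (((d : ℝ) - 1) * (N : ℝ) -
        ∑ k ∈ d.divisors.filter (fun k => k < d), (Nat.totient (d / k) : ℝ) * (Fb k : ℝ)) /
        (d : ℝ) ≤ (Ind : ℝ) := by
  subst hN hd hInd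
  have hd : 0 < orderOf x := orderOf_pos x
  have key : Nat.card (orbitRel.Quotient (zpowers x) Ω) * orderOf x ≤
      ∑ k ∈ (orderOf x).divisors.filter (· < orderOf x), φ (orderOf x / k) * Fb k +
        Fintype.card Ω := by
    rw [card_orbits_zpowers_mul_orderOf (isOfFinOrder_of_finite x), Nat.filter_lt_divisors,
      ← Nat.cons_self_properDivisors hd.ne', sum_cons, add_comm]
    gcongr with k hk
    · exact (Nat.mem_properDivisors.1 hk).elim (hF k)
    · rw [Nat.div_self hd, pow_orderOf_eq_one, Nat.totient_one, one_mul, fixedBy_one_eq_univ,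
        Nat.card_univ, Nat.card_eq_fintype_card]
  rw [div_le_iff₀ (by exact_mod_cast hd)]
  have key_real := (Nat.cast_le (α := ℝ)).2 key
  push_cast at key_real ⊢
  linarith
end
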